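/- arXiv:1909.10917 — 4 statements merged into one kernel-verified Lean document; each statement's English description precedes it below -/
import Mathlib

section
/- For a function $w \in W^{1,1}(\mathbb{R})$ (i.e., $w, w' \in L^1(\mathbb{R})$) whose second derivative is a finite Borel measure $\nu$ on $\mathbb{R}$, and a mesh size $h > 0$ with grid points $x_i = ih$, the trapezoidal-type approximation of the integral satisfies $\left| \int_{\mathbb{R}} w(x)\,dx - \sum_{i \in \mathbb{Z}} h\, w(x_i) \right| \le h^2 |\nu|(\mathbb{R})$. -/
/-!
On each cell `(ih, (i+1)h]`, integration by parts writes the trapezoid error as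
`∫ (w' t - w' (ih)) (m - t) dt` with `m` the midpoint, and `|w' t - w' (ih)| = |ν (ih, t]|` is at
most the total variation of the cell, so each cell contributes at most `h²/2 · |ν|(cell)`.
The trapezoid sum differs from the left-endpoint sum by `h/2 · ∫ w'`, which vanishes because
`w, w' ∈ L¹` forces `w → 0` at `±∞`.
-/

open MeasureTheory Set Function intervalIntegral
open scoped Interval

theorem iUnion_Ioc_intCast_mul {α : Type*} [Ring α] [LinearOrder α] [IsStrictOrderedRing α]
    [Archimedean α] {h : α} (hh : 0 < h) :
    ⋃ n : ℤ, Ioc (n * h) ((n + 1) * h) = univ := by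
  simpa only [zero_add, zsmul_eq_mul, Int.cast_add, Int.cast_one] using iUnion_Ioc_add_zsmul hh 0

theorem pairwise_disjoint_Ioc_intCast_mul {α : Type*} [Ring α] [PartialOrder α] [IsOrderedRing α]
    (h : α) :
    Pairwise (Disjoint on fun n : ℤ => Ioc (n * h) ((n + 1) * h)) := by
  simpa only [zero_add, zsmul_eq_mul, Int.cast_add, Int.cast_one] using
    pairwise_disjoint_Ioc_add_zsmul 0 h

theorem hasSum_integral_Ioc_intCast_mul {E : Type*} [NormedAddCommGroup E] [NormedSpace ℝ E]
    {μ : Measure ℝ} {f : ℝ → E} {h : ℝ} (hh : 0 < h) (hf : Integrable f μ) :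
    HasSum (fun n : ℤ => ∫ x in Ioc (n * h) ((n + 1) * h), f x ∂μ) (∫ x, f x ∂μ) := by
  simpa only [iUnion_Ioc_intCast_mul hh, Measure.restrict_univ] using
    hasSum_integral_iUnion (fun _ => measurableSet_Ioc) (pairwise_disjoint_Ioc_intCast_mul h)
      hf.integrableOn

theorem hasSum_measureReal_Ioc_intCast_mul (μ : Measure ℝ) [IsFiniteMeasure μ] {h : ℝ}
    (hh : 0 < h) : HasSum (fun n : ℤ => μ.real (Ioc (n * h) ((n + 1) * h))) (μ.real univ) := by
  simpa using hasSum_integral_Ioc_intCast_mul (μ := μ) hh (integrable_const (1 : ℝ))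

/-- The constant `c` is arbitrary because the kernel `(a + b) / 2 - t` has mean zero on `[a, b]`. -/
theorem integral_sub_trapezoid_eq {w w' : ℝ → ℝ} {a b : ℝ}
    (hw : ∀ x ∈ uIcc a b, HasDerivAt w (w' x) x) (hw' : IntervalIntegrable w' volume a b)
    (c : ℝ) :
    (∫ x in a..b, w x) - (b - a) / 2 * (w a + w b)
      = ∫ t in a..b, (w' t - c) * ((a + b) / 2 - t) := by
  have hkernel : ∀ t ∈ uIcc a b, HasDerivAt (fun t => (a + b) / 2 - t) (-1) t := fun t _ => by
    simpa using (hasDerivAt_id t).const_sub ((a + b) / 2)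
  have hparts := integral_mul_deriv_eq_deriv_mul hw hkernel hw' intervalIntegrable_const
  have hmean : ∫ t in a..b, ((a + b) / 2 - t) = 0 := by
    rw [intervalIntegral.integral_sub intervalIntegrable_const intervalIntegrable_id,
      intervalIntegral.integral_const, integral_id,
      smul_eq_mul]
    ring
  have hsplit : (fun t => (w' t - c) * ((a + b) / 2 - t))
      = fun t => w' t * ((a + b) / 2 - t) - c * ((a + b) / 2 - t) := by
    ext t; ring
  rw [hsplit, intervalIntegral.integral_sub, intervalIntegral.integral_const_mul, hmean]
  · simp only [mul_neg, mul_one, intervalIntegral.integral_neg] at hparts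
    linarith
  · exact hw'.mul_continuousOn (continuous_const.sub continuous_id).continuousOn
  · exact (continuous_const.mul (continuous_const.sub continuous_id)).intervalIntegrable _ _

theorem abs_integral_mul_midpoint_sub_le {g : ℝ → ℝ} {a b V : ℝ} (hab : a ≤ b)
    (hg : ∀ t ∈ Ioc a b, |g t| ≤ V) :
    |∫ t in a..b, g t * ((a + b) / 2 - t)| ≤ (b - a) ^ 2 / 2 * V := by
  have hbound : ∀ t ∈ Ι a b, ‖g t * ((a + b) / 2 - t)‖ ≤ V * ((b - a) / 2) := by
    intro t ht
    rw [uIoc_of_le hab] at ht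
    rw [Real.norm_eq_abs, abs_mul]
    have hkernel : |(a + b) / 2 - t| ≤ (b - a) / 2 := by
      rw [abs_le]; constructor <;> linarith [ht.1, ht.2]
    exact mul_le_mul (hg t ht) hkernel (abs_nonneg _) ((abs_nonneg _).trans (hg t ht))
  calc |∫ t in a..b, g t * ((a + b) / 2 - t)|
      ≤ V * ((b - a) / 2) * |b - a| := norm_integral_le_of_norm_le_const hbound
    _ = (b - a) ^ 2 / 2 * V := by rw [abs_of_nonneg (sub_nonneg.2 hab)]; ring

/-- Trapezoidal-type quadrature error for `w ∈ W^{1,1}(ℝ)` whose second derivative is a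
finite (signed) Borel measure `ν`: the error is at most `h² |ν|(ℝ)`. -/
theorem stmt_0 (w : ℝ → ℝ) (ν : SignedMeasure ℝ) (h : ℝ) (hh : 0 < h)
    (hw : Differentiable ℝ w)
    (hwL1 : Integrable w) (hw'L1 : Integrable (deriv w))
    (hν : ∀ a b : ℝ, a ≤ b → deriv w b - deriv w a = ν (Set.Ioc a b)) :
    |(∫ x, w x) - ∑' i : ℤ, h * w (i * h)| ≤ h ^ 2 * (ν.totalVariation Set.univ).toReal := by
  have hd : ∀ x, HasDerivAt w (deriv w x) x := fun x => (hw x).hasDerivAt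
  set μ := ν.totalVariation
  set R : ℤ → ℝ := fun i => ∫ t in (i * h)..((i + 1) * h),
    (deriv w t - deriv w (i * h)) * ((i * h + (i + 1) * h) / 2 - t)
  have hcell : ∀ i : ℤ, h * w (i * h) = (∫ x in Ioc (i * h) ((i + 1) * h), w x) - R i
      - h / 2 * ∫ x in Ioc (i * h) ((i + 1) * h), deriv w x := by
    intro i
    have hab : (i : ℝ) * h ≤ (i + 1) * h := by nlinarith
    have htrap : _ = R i := integral_sub_trapezoid_eq (fun x _ => hd x)
      hw'L1.intervalIntegrable (deriv w (i * h))
    rw [← integral_of_le hab, ← integral_of_le hab,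
      integral_eq_sub_of_hasDerivAt (fun x _ => hd x) hw'L1.intervalIntegrable]
    linear_combination -htrap
  have hR : ∀ i : ℤ, ‖R i‖ ≤ h ^ 2 / 2 * μ.real (Ioc (i * h) ((i + 1) * h)) := by
    intro i
    have hab : (i : ℝ) * h ≤ (i + 1) * h := by nlinarith
    rw [Real.norm_eq_abs]
    refine (abs_integral_mul_midpoint_sub_le (g := fun t => deriv w t - deriv w (i * h))
      (V := μ.real (Ioc (i * h) ((i + 1) * h))) hab
      fun t ht => ?_).trans_eq (by ring)
    rw [hν _ _ ht.1.le]
    exact (ν.norm_le_totalVariation _).trans (measureReal_mono (Ioc_subset_Ioc_right ht.2))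
  have hμ := (hasSum_measureReal_Ioc_intCast_mul μ hh).mul_left (h ^ 2 / 2)
  have hsum : HasSum (fun i : ℤ => h * w (i * h)) ((∫ x, w x) - ∑' i, R i - h / 2 * 0) := by
    simp only [hcell]
    refine ((hasSum_integral_Ioc_intCast_mul hh hwL1).sub
      (Summable.of_norm_bounded hμ.summable hR).hasSum).sub ?_
    rw [← integral_eq_zero_of_hasDerivAt_of_integrable hd hw'L1 hwL1]
    exact (hasSum_integral_Ioc_intCast_mul hh hw'L1).mul_left _
  rw [hsum.tsum_eq, mul_zero, sub_zero, sub_sub_cancel, ← Real.norm_eq_abs]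
  calc ‖∑' i, R i‖ ≤ h ^ 2 / 2 * μ.real univ := tsum_of_norm_bounded hμ hR
    _ ≤ h ^ 2 * μ.real univ := by gcongr; linarith [sq_nonneg h]
end

section
/- Let $s \ge 0$ and let $f \in C^{[s]+1}(\mathbb{R})$ with $f(0) = 0$. Then for any $u \in H^s(\mathbb{R}) \cap L^\infty(\mathbb{R})$, the composition $f(u)$ belongs to $H^s(\mathbb{R}) \cap L^\infty(\mathbb{R})$, and for every $M > 0$ there is a constant $C(M)$ such that $\|f(u)\|_{H^s} \le C(M)\|u\|_{H^s}$ whenever $\|u\|_{L^\infty} \le M$. -/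
/-!
On `[-M, M]` the derivative of `f` is bounded by some `B`. Since `f 0 = 0`, the mean value
theorem gives `|f (u x)| ≤ B |u x|`, and the chain rule gives `|(f ∘ u)' x| ≤ B |u' x|`;
both pointwise bounds pass to `L²` norms, and `|f (u x)| ≤ B M` gives the `L^∞` bound.
-/

open MeasureTheory Set

section CompositionBounds

variable {f : ℝ → ℝ} {B M : ℝ}

theorem norm_le_mul_norm_of_norm_deriv_le (hfd : Differentiable ℝ f) (hf0 : f 0 = 0)
    (hB : ∀ y ∈ Icc (-M) M, ‖deriv f y‖ ≤ B) {y : ℝ} (hy : |y| ≤ M) : ‖f y‖ ≤ B * ‖y‖ := by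
  have h0 : (0 : ℝ) ∈ Icc (-M) M := ⟨by linarith [abs_nonneg y], by linarith [abs_nonneg y]⟩
  simpa [hf0] using (convex_Icc (-M) M).norm_image_sub_le_of_norm_deriv_le
    (fun z _ => hfd z) hB h0 (abs_le.1 hy)

theorem norm_deriv_comp_le_mul (hfd : Differentiable ℝ f)
    (hB : ∀ y ∈ Icc (-M) M, ‖deriv f y‖ ≤ B) {u : ℝ → ℝ} (hu : Differentiable ℝ u)
    (huM : ∀ x, |u x| ≤ M) (x : ℝ) :
    ‖deriv (fun x => f (u x)) x‖ ≤ B * ‖deriv u x‖ := by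
  have hchain : HasDerivAt (fun x => f (u x)) (deriv f (u x) * deriv u x) x :=
    (hfd (u x)).hasDerivAt.comp x (hu x).hasDerivAt
  rw [hchain.deriv, norm_mul]
  exact mul_le_mul_of_nonneg_right (hB _ (abs_le.1 (huM x))) (norm_nonneg _)

end CompositionBounds

/-- Sobolev composition estimate (integer case `s = 1`): if `f ∈ C²(ℝ)` with `f(0) = 0`,
then for every `M > 0` there is `C(M)` such that for every `u ∈ H¹(ℝ) ∩ L^∞(ℝ)` with
`‖u‖_{L^∞} ≤ M`, the composition `f ∘ u` lies in `H¹(ℝ) ∩ L^∞(ℝ)` and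
`‖f(u)‖_{H¹} ≤ C(M) ‖u‖_{H¹}`. -/
theorem stmt_12 (f : ℝ → ℝ) (hf : ContDiff ℝ 2 f) (hf0 : f 0 = 0) :
    ∀ M : ℝ, 0 < M → ∃ C : ℝ, 0 ≤ C ∧
      ∀ u : ℝ → ℝ, Differentiable ℝ u →
        MemLp u 2 (volume : Measure ℝ) → MemLp (deriv u) 2 (volume : Measure ℝ) →
        (∀ x, |u x| ≤ M) →
        MemLp (fun x => f (u x)) 2 (volume : Measure ℝ) ∧
        MemLp (deriv fun x => f (u x)) 2 (volume : Measure ℝ) ∧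
        (∀ x, |f (u x)| ≤ C) ∧
        eLpNorm (fun x => f (u x)) 2 (volume : Measure ℝ)
            + eLpNorm (deriv fun x => f (u x)) 2 (volume : Measure ℝ)
          ≤ ENNReal.ofReal C *
            (eLpNorm u 2 (volume : Measure ℝ) + eLpNorm (deriv u) 2 (volume : Measure ℝ)) := by
  intro M hM
  have hfd : Differentiable ℝ f := hf.differentiable two_ne_zero
  obtain ⟨B, hB⟩ := isCompact_Icc.exists_bound_of_continuousOn
    (hf.continuous_deriv one_le_two).continuousOn (s := Icc (-M) M)
  have hB0 : 0 ≤ B := (norm_nonneg _).trans (hB 0 ⟨by linarith, hM.le⟩)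
  refine ⟨B * (M + 1), by positivity, fun u hu huL2 hu'L2 huM => ?_⟩
  have hval (x : ℝ) : ‖f (u x)‖ ≤ B * ‖u x‖ := norm_le_mul_norm_of_norm_deriv_le hfd hf0 hB (huM x)
  have hder := norm_deriv_comp_le_mul hfd hB hu huM
  refine ⟨huL2.of_le_mul (hf.continuous.comp hu.continuous).aestronglyMeasurable (.of_forall hval),
    hu'L2.of_le_mul (measurable_deriv _).aestronglyMeasurable (.of_forall hder), fun x => ?_, ?_⟩
  · calc |f (u x)| ≤ B * |u x| := hval x
      _ ≤ B * (M + 1) := by gcongr; linarith [huM x]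
  · calc _ ≤ ENNReal.ofReal B * eLpNorm u 2 volume
            + ENNReal.ofReal B * eLpNorm (deriv u) 2 volume :=
          add_le_add (eLpNorm_le_mul_eLpNorm_of_ae_le_mul (.of_forall hval) 2)
            (eLpNorm_le_mul_eLpNorm_of_ae_le_mul (.of_forall hder) 2)
      _ ≤ _ := by
          rw [← mul_add]
          gcongr
          nlinarith
end

section
/- Let $\mu$ be a finite signed Borel measure on $\mathbb{R}$, let $g \in C^2(\mathbb{R})$ with $g', g''$ bounded, and let $\beta(x) = \mu((-\infty, x])$ with $\beta \in L^1(\mathbb{R})$. Fix $h > 0$ and a grid point $x_i$. Then the rectangular-rule error for the convolution satisfies $\left| \sum_{j \in \mathbb{Z}} h\, \beta(x_i - x_j) g'(x_j) - \int_{\mathbb{R}} \beta(x_i - y) g'(y)\, dy \right| \le h \left( |\mu|(\mathbb{R}) \|g'\|_{L^\infty} + \|\beta\|_{L^1} \|g''\|_{L^\infty} \right)$. -/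
/-!
Cut ℝ into the cells `[j h, (j + 1) h)`. On a cell, the integrand `r y = β (xi - y) g' y` differs
from its value at the left endpoint by at most `‖g'‖∞` times the `|μ|`-mass of the reflected cell
(the increment of `β`) plus `h ‖g''‖∞ |β (xi - y)|` (the increment of `g'`). Integrating over the
cell and summing over `j`, the reflected cells again partition ℝ, and the second terms add up to
`h ‖g''‖∞ ‖β‖₁`.
-/

open MeasureTheory Set Function

theorem iUnion_Ico_intCast_mul {h : ℝ} (hh : 0 < h) :
    ⋃ j : ℤ, Ico ((j : ℝ) * h) ((j + 1) * h) = univ := by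
  simpa [zsmul_eq_mul] using iUnion_Ico_zsmul hh

theorem pairwise_disjoint_Ico_intCast_mul (h : ℝ) :
    Pairwise (Disjoint on fun j : ℤ => Ico ((j : ℝ) * h) ((j + 1) * h)) := by
  simpa [zsmul_eq_mul] using pairwise_disjoint_Ico_zsmul h

theorem norm_tsum_sub_le_of_hasSum {ι E : Type*} [NormedAddCommGroup E] [CompleteSpace E]
    {f F : ι → E} {B : ι → ℝ} {I : E} {S : ℝ} (hF : HasSum F I) (hB : HasSum B S)
    (hfF : ∀ i, ‖f i - F i‖ ≤ B i) : ‖∑' i, f i - I‖ ≤ S := by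
  have hdiff : Summable (f - F) := .of_norm_bounded hB.summable hfF
  have hf : Summable f := by simpa using hdiff.add hF.summable
  rw [← hF.tsum_eq, ← hf.tsum_sub hF.summable]
  exact tsum_of_norm_bounded hB hfF

namespace MeasureTheory

theorem hasSum_measureReal_iUnion {α ι : Type*} [MeasurableSpace α] [Countable ι]
    {ν : Measure α} [IsFiniteMeasure ν] {s : ι → Set α} (hs : ∀ i, MeasurableSet (s i))
    (hd : Pairwise (Disjoint on s)) : HasSum (fun i => ν.real (s i)) (ν.real (⋃ i, s i)) := by
  simpa using hasSum_integral_iUnion hs hd (integrableOn_const (μ := ν) (C := (1 : ℝ)))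

theorem norm_measureReal_smul_sub_setIntegral_le {α E : Type*} [MeasurableSpace α]
    [NormedAddCommGroup E] [NormedSpace ℝ E] [CompleteSpace E] {μ : Measure α} {s : Set α}
    (hs : MeasurableSet s) (hμs : μ s ≠ ⊤) {r : α → E} {b : α → ℝ} {c : E} {a : ℝ}
    (hr : IntegrableOn r s μ) (hb : IntegrableOn b s μ)
    (hosc : ∀ y ∈ s, ‖c - r y‖ ≤ a + b y) :
    ‖μ.real s • c - ∫ y in s, r y ∂μ‖ ≤ μ.real s * a + ∫ y in s, b y ∂μ := by
  have hconst : IntegrableOn (fun _ => c) s μ := integrableOn_const hμs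
  have hconstR : IntegrableOn (fun _ => a) s μ := integrableOn_const hμs
  calc ‖μ.real s • c - ∫ y in s, r y ∂μ‖ = ‖∫ y in s, (c - r y) ∂μ‖ := by
        rw [integral_sub hconst hr, setIntegral_const]
    _ ≤ ∫ y in s, (a + b y) ∂μ :=
        norm_integral_le_of_norm_le (hconstR.add hb) (ae_restrict_of_forall_mem hs hosc)
    _ = μ.real s * a + ∫ y in s, b y ∂μ := by
        rw [integral_add hconstR hb, setIntegral_const, smul_eq_mul]

theorem hasSum_setIntegral_Ico_intCast_mul {E : Type*} [NormedAddCommGroup E] [NormedSpace ℝ E]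
    {f : ℝ → E} {h : ℝ} (hh : 0 < h) (hf : Integrable f) :
    HasSum (fun j : ℤ => ∫ y in Ico ((j : ℝ) * h) ((j + 1) * h), f y) (∫ y, f y) := by
  simpa [iUnion_Ico_intCast_mul hh] using hasSum_integral_iUnion (fun _ => measurableSet_Ico)
    (pairwise_disjoint_Ico_intCast_mul h) hf.integrableOn

theorem norm_tsum_smul_sub_integral_le {E : Type*} [NormedAddCommGroup E] [NormedSpace ℝ E]
    [CompleteSpace E] {r : ℝ → E} {b : ℝ → ℝ} {a : ℤ → ℝ} {h A : ℝ} (hh : 0 < h)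
    (hr : Integrable r) (hb : Integrable b) (ha : HasSum a A)
    (hosc : ∀ j : ℤ, ∀ y ∈ Ico ((j : ℝ) * h) ((j + 1) * h),
      ‖r (j * h) - r y‖ ≤ a j + b y) :
    ‖∑' j : ℤ, h • r (j * h) - ∫ y, r y‖ ≤ h * A + ∫ y, b y := by
  refine norm_tsum_sub_le_of_hasSum (hasSum_setIntegral_Ico_intCast_mul hh hr)
    ((ha.mul_left h).add (hasSum_setIntegral_Ico_intCast_mul hh hb)) fun j => ?_
  have hvol : volume.real (Ico ((j : ℝ) * h) ((j + 1) * h)) = h := by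
    rw [Real.volume_real_Ico_of_le (by nlinarith)]; ring
  simpa [hvol] using norm_measureReal_smul_sub_setIntegral_le measurableSet_Ico
    measure_Ico_lt_top.ne hr.integrableOn hb.integrableOn (hosc j)

theorem hasSum_measureReal_Ioc_sub_intCast_mul (ν : Measure ℝ) [IsFiniteMeasure ν] (c : ℝ)
    {h : ℝ} (hh : 0 < h) :
    HasSum (fun j : ℤ => ν.real (Ioc (c - (j + 1) * h) (c - j * h))) (ν.real univ) := by
  have hpre (j : ℤ) : (c - ·) ⁻¹' Ico ((j : ℝ) * h) ((j + 1) * h)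
      = Ioc (c - (j + 1) * h) (c - j * h) := by
    ext x
    simp only [mem_preimage, mem_Ico, mem_Ioc]
    constructor <;> rintro ⟨h1, h2⟩ <;> constructor <;> linarith
  have := hasSum_measureReal_iUnion (ν := ν)
    (s := fun j : ℤ => (c - ·) ⁻¹' Ico ((j : ℝ) * h) ((j + 1) * h))
    (fun j => measurableSet_Ico.preimage (measurable_const.sub measurable_id))
    ((pairwise_disjoint_Ico_intCast_mul h).mono fun _ _ hd => hd.preimage (c - ·))
  rw [← preimage_iUnion, iUnion_Ico_intCast_mul hh, preimage_univ] at this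
  simpa only [hpre] using this

end MeasureTheory

namespace MeasureTheory.SignedMeasure

theorem abs_apply_le_totalVariation {α : Type*} [MeasurableSpace α]
    (μ : SignedMeasure α) {s : Set α} (hs : MeasurableSet s) :
    |μ s| ≤ μ.totalVariation.real s := by
  conv_lhs => rw [← μ.toSignedMeasure_toJordanDecomposition]
  rw [JordanDecomposition.toSignedMeasure, Measure.toSignedMeasure_sub_apply hs,
    SignedMeasure.totalVariation, measureReal_add_apply]
  exact (abs_sub _ _).trans_eq <| by
    rw [abs_of_nonneg measureReal_nonneg, abs_of_nonneg measureReal_nonneg]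

theorem apply_Iic_sub_apply_Iic (μ : SignedMeasure ℝ) {a b : ℝ} (hab : a ≤ b) :
    μ (Iic b) - μ (Iic a) = μ (Ioc a b) := by
  rw [← Iic_union_Ioc_eq_Iic hab,
    VectorMeasure.of_union (Iic_disjoint_Ioc le_rfl) measurableSet_Iic measurableSet_Ioc]
  abel

variable (μ : SignedMeasure ℝ) {β : ℝ → ℝ} (hβ : ∀ x, β x = μ (Iic x))
include hβ

theorem abs_sub_le_totalVariation_Ioc {a b : ℝ} (hab : a ≤ b) :
    |β b - β a| ≤ μ.totalVariation.real (Ioc a b) := by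
  rw [hβ, hβ, μ.apply_Iic_sub_apply_Iic hab]
  exact μ.abs_apply_le_totalVariation measurableSet_Ioc

theorem abs_cdf_mul_sub_cdf_mul_le {u : ℝ → ℝ} {C1 C2 : ℝ} (hu : ∀ x, |u x| ≤ C1)
    (hlip : ∀ x y, |u x - u y| ≤ C2 * |x - y|) (xi : ℝ) {x y : ℝ} (hxy : x ≤ y) :
    |β (xi - x) * u x - β (xi - y) * u y|
      ≤ C1 * μ.totalVariation.real (Ioc (xi - y) (xi - x)) + C2 * (y - x) * |β (xi - y)| := by
  have hinc := μ.abs_sub_le_totalVariation_Ioc hβ (by linarith : xi - y ≤ xi - x)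
  have hlip' : |u x - u y| ≤ C2 * (y - x) := by
    simpa [abs_sub_comm x y, abs_of_nonneg (sub_nonneg.2 hxy)] using hlip x y
  calc |β (xi - x) * u x - β (xi - y) * u y|
      = |(β (xi - x) - β (xi - y)) * u x + β (xi - y) * (u x - u y)| := by
        congr 1; ring
    _ ≤ |β (xi - x) - β (xi - y)| * |u x| + |β (xi - y)| * |u x - u y| := by
      rw [← abs_mul, ← abs_mul]
      exact abs_add_le _ _
    _ ≤ μ.totalVariation.real (Ioc (xi - y) (xi - x)) * C1 + |β (xi - y)| * (C2 * (y - x)) := by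
      gcongr
      exact hu x
    _ = _ := by ring

end MeasureTheory.SignedMeasure

open MeasureTheory.SignedMeasure in
/-- Rectangular-rule error for the convolution term: with `β(x) = μ((-∞,x])` integrable,
`μ` a finite signed measure, and `g ∈ C²` with `|g'| ≤ C1`, `|g''| ≤ C2`, the quadrature
error at a grid point `xi` is at most `h (|μ|(ℝ) C1 + ‖β‖_{L¹} C2)`. -/
theorem stmt_16 (μ : SignedMeasure ℝ) (β g : ℝ → ℝ) (h C1 C2 xi : ℝ) (hh : 0 < h)
    (hg : ContDiff ℝ 2 g)
    (hg1 : ∀ x, |deriv g x| ≤ C1) (hg2 : ∀ x, |deriv (deriv g) x| ≤ C2)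
    (hβ : ∀ x : ℝ, β x = μ (Set.Iic x)) (hβL1 : Integrable β) :
    |(∑' j : ℤ, h * β (xi - j * h) * deriv g (j * h))
        - ∫ y : ℝ, β (xi - y) * deriv g y|
      ≤ h * ((μ.totalVariation Set.univ).toReal * C1 + (∫ x : ℝ, |β x|) * C2) := by
  set ν := μ.totalVariation
  have hC1 : 0 ≤ C1 := (abs_nonneg _).trans (hg1 0)
  have hβ' : Integrable fun y => β (xi - y) := hβL1.comp_sub_left xi
  have hr : Integrable fun y => β (xi - y) * deriv g y :=
    hβ'.mul_bdd hg.differentiable_deriv_two.continuous.aestronglyMeasurable (ae_of_all _ hg1)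
  have hlip (x y : ℝ) : |deriv g x - deriv g y| ≤ C2 * |x - y| :=
    convex_univ.norm_image_sub_le_of_norm_deriv_le (fun z _ => hg.differentiable_deriv_two z)
      (fun z _ => hg2 z) trivial trivial
  have hν := hasSum_measureReal_Ioc_sub_intCast_mul ν xi hh
  have hosc (j : ℤ) (y : ℝ) (hy : y ∈ Ico ((j : ℝ) * h) ((j + 1) * h)) :
      |β (xi - j * h) * deriv g (j * h) - β (xi - y) * deriv g y|
        ≤ C1 * ν.real (Ioc (xi - (j + 1) * h) (xi - j * h)) + C2 * h * |β (xi - y)| := by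
    refine (abs_cdf_mul_sub_cdf_mul_le μ hβ hg1 hlip xi hy.1).trans (add_le_add ?_ ?_)
    · exact mul_le_mul_of_nonneg_left
        (measureReal_mono (Ioc_subset_Ioc (by linarith [hy.2]) le_rfl)) hC1
    · have hC2 : 0 ≤ C2 := (abs_nonneg _).trans (hg2 0)
      gcongr
      linarith [hy.2]
  have := norm_tsum_smul_sub_integral_le hh hr (hβ'.abs.const_mul (C2 * h)) (hν.mul_left C1) hosc
  rw [integral_const_mul, integral_sub_left_eq_self (fun y => |β y|)] at this
  simpa [mul_assoc, ← measureReal_def] using this.trans_eq (by ring)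
end

section
/- For $p \ge 1$ and $c > 1$, the function $u(x,t) = A\, \left(\mathrm{sech}^2(B(x - ct))\right)^{1/p}$ with $A = \left(\frac{(p+2)(c-1)}{2}\right)^{1/p}$ and $B = \frac{p}{2}\sqrt{1 - 1/c}$ is a solution of the generalized BBM equation $u_t + u_x - u_{xxt} + (u^{p+1})_x = 0$. -/
/-! In the variable `ξ = x - c t` the equation for a travelling wave `u = φ(ξ)` is the derivative
of the ODE `(1 - c) φ + c φ'' + φ ^ (p + 1) = 0`. For `φ = A cosh(B ξ) ^ r` with `r = -2/p`,
the identity `sinh² = cosh² - 1` makes `φ''` a combination of `cosh ^ r` and `cosh ^ (r - 2)`,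
while `φ ^ (p + 1) = A ^ (p + 1) cosh ^ (r - 2)`. The ODE thus reduces to the two coefficient
identities `c r² B² = c - 1` and `c r (r - 1) B² = A ^ p`, which are what fix `B` and `A`. -/

open Real

noncomputable def gbbmResidual (q : ℝ) (u : ℝ → ℝ → ℝ) (x t : ℝ) : ℝ :=
  deriv (fun t' => u x t') t + deriv (fun x' => u x' t) x
    - deriv (fun t' => iteratedDeriv 2 (fun x' => u x' t') x) t
    + deriv (fun x' => u x' t ^ q) x

lemma deriv_comp_const_sub_mul {g : ℝ → ℝ} {x c t : ℝ} (hg : DifferentiableAt ℝ g (x - c * t)) :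
    deriv (fun t' => g (x - c * t')) t = -c * deriv g (x - c * t) := by
  have hlin : HasDerivAt (fun t' => x - c * t') (-c) t := by
    simpa using ((hasDerivAt_id t).const_mul c).const_sub x
  rw [show (fun t' => g (x - c * t')) = g ∘ fun t' => x - c * t' from rfl,
    (hg.hasDerivAt.comp t hlin).deriv]
  ring

theorem gbbmResidual_travelingWave {f : ℝ → ℝ} {c q : ℝ} (hf : ContDiff ℝ 3 f)
    (hode : ∀ ξ, (1 - c) * f ξ + c * iteratedDeriv 2 f ξ + f ξ ^ q = 0) (x t : ℝ) :
    gbbmResidual q (fun x t => f (x - c * t)) x t = 0 := by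
  have hf₁ : Differentiable ℝ f := hf.differentiable (by norm_num)
  have hf₃ : Differentiable ℝ (iteratedDeriv 2 f) := hf.differentiable_iteratedDeriv' 2
  have hpow : (fun ξ => f ξ ^ q) = fun ξ => -((1 - c) * f ξ) - c * iteratedDeriv 2 f ξ := by
    funext ξ
    linear_combination hode ξ
  have hpow' : deriv (fun ξ => f ξ ^ q) (x - c * t)
      = -((1 - c) * deriv f (x - c * t)) - c * iteratedDeriv 3 f (x - c * t) := by
    rw [hpow, iteratedDeriv_succ (n := 2)]
    exact (((hf₁ _).hasDerivAt.const_mul _).neg.sub ((hf₃ _).hasDerivAt.const_mul c)).deriv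
  unfold gbbmResidual
  simp only [iteratedDeriv_comp_sub_const]
  rw [deriv_comp_const_sub_mul (hf₁ _), deriv_comp_const_sub_mul (hf₃ _),
    deriv_comp_sub_const (f := f), deriv_comp_sub_const (f := fun ξ => f ξ ^ q), hpow',
    ← iteratedDeriv_succ]
  ring

section CoshRpow

variable (B r : ℝ)

lemma hasDerivAt_cosh_mul (ξ : ℝ) : HasDerivAt (fun ξ => cosh (B * ξ)) (sinh (B * ξ) * B) ξ := by
  simpa using ((hasDerivAt_id ξ).const_mul B).cosh

lemma hasDerivAt_cosh_mul_rpow (ξ : ℝ) :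
    HasDerivAt (fun ξ => cosh (B * ξ) ^ r) (r * B * cosh (B * ξ) ^ (r - 1) * sinh (B * ξ)) ξ := by
  convert (hasDerivAt_cosh_mul B ξ).rpow_const (p := r) (Or.inl (cosh_pos _).ne') using 1
  ring

lemma deriv_cosh_mul_rpow :
    deriv (fun ξ => cosh (B * ξ) ^ r) = fun ξ => r * B * cosh (B * ξ) ^ (r - 1) * sinh (B * ξ) :=
  funext fun ξ => (hasDerivAt_cosh_mul_rpow B r ξ).deriv

lemma iteratedDeriv_two_cosh_mul_rpow (ξ : ℝ) :
    iteratedDeriv 2 (fun ξ => cosh (B * ξ) ^ r) ξ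
      = r * B ^ 2 * (r * cosh (B * ξ) ^ r - (r - 1) * cosh (B * ξ) ^ (r - 2)) := by
  have hsinh : HasDerivAt (fun ξ => sinh (B * ξ)) (cosh (B * ξ) * B) ξ := by
    simpa using ((hasDerivAt_id ξ).const_mul B).sinh
  have h := ((hasDerivAt_cosh_mul_rpow B (r - 1) ξ).const_mul (r * B)).mul hsinh
  rw [iteratedDeriv_succ, iteratedDeriv_one, deriv_cosh_mul_rpow]
  refine h.deriv.trans ?_
  have hC : 0 < cosh (B * ξ) := cosh_pos _
  have hpyth : sinh (B * ξ) ^ 2 = cosh (B * ξ) ^ 2 - 1 := by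
    linear_combination -(cosh_sq_sub_sinh_sq (B * ξ))
  have hshift : ∀ s : ℝ, cosh (B * ξ) ^ s = cosh (B * ξ) ^ (s - 2) * cosh (B * ξ) ^ 2 := by
    intro s
    rw [← rpow_natCast, ← rpow_add hC]
    norm_num
  have hshift1 : cosh (B * ξ) ^ (r - 1) = cosh (B * ξ) ^ (r - 2) * cosh (B * ξ) := by
    rw [← rpow_add_one hC.ne']
    congr 1
    ring
  rw [hshift r, hshift1, show r - 1 - 1 = r - 2 by ring]
  linear_combination (r * B ^ 2 * (r - 1) * cosh (B * ξ) ^ (r - 2)) * hpyth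

end CoshRpow

lemma one_div_sq_rpow_one_div {C : ℝ} (hC : 0 < C) (p : ℝ) :
    ((1 / C) ^ 2) ^ (1 / p) = C ^ (-2 / p) := by
  rw [one_div C, inv_pow, inv_rpow (by positivity), ← rpow_natCast, ← rpow_mul hC.le,
    ← rpow_neg hC.le]
  congr 1
  push_cast
  ring

lemma solitaryProfile_ode {p c A B : ℝ} (hp : p ≠ 0) (hA₀ : 0 < A)
    (hA : A ^ p = (p + 2) * (c - 1) / 2) (hB : 4 * c * B ^ 2 = p ^ 2 * (c - 1)) (ξ : ℝ) :
    (1 - c) * (A * cosh (B * ξ) ^ (-2 / p))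
      + c * iteratedDeriv 2 (fun ξ => A * cosh (B * ξ) ^ (-2 / p)) ξ
      + (A * cosh (B * ξ) ^ (-2 / p)) ^ (p + 1) = 0 := by
  set r := -2 / p
  have hrp : r * p = -2 := div_mul_cancel₀ _ hp
  have hC : 0 < cosh (B * ξ) := cosh_pos _
  have hpow : (A * cosh (B * ξ) ^ r) ^ (p + 1) = A ^ p * A * cosh (B * ξ) ^ (r - 2) := by
    rw [mul_rpow hA₀.le (rpow_nonneg hC.le _), ← rpow_mul hC.le, rpow_add_one hA₀.ne']
    congr 2
    linear_combination hrp
  rw [iteratedDeriv_const_mul_field, iteratedDeriv_two_cosh_mul_rpow, hpow, hA]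
  linear_combination
    (A * cosh (B * ξ) ^ r * r ^ 2 / 4 - A * cosh (B * ξ) ^ (r - 2) * r * (r - 1) / 4) * hB
    + (A * cosh (B * ξ) ^ r * (c - 1) * (r * p - 2) / 4
      - A * cosh (B * ξ) ^ (r - 2) * (c - 1) * (r * p - p - 2) / 4) * hrp

/-- The solitary wave `u(x,t) = A (sech²(B(x-ct)))^{1/p}`, with
`A = ((p+2)(c-1)/2)^{1/p}` and `B = (p/2)√(1-1/c)`, solves the generalized BBM equation
`u_t + u_x - u_{xxt} + (u^{p+1})_x = 0` for `p ≥ 1`, `c > 1`. -/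
theorem stmt_17 (p c : ℝ) (hp : 1 ≤ p) (hc : 1 < c)
    (A B : ℝ) (hA : A = ((p + 2) * (c - 1) / 2) ^ (1 / p))
    (hB : B = (p / 2) * Real.sqrt (1 - 1 / c))
    (u : ℝ → ℝ → ℝ)
    (hu : ∀ x t : ℝ, u x t = A * ((1 / Real.cosh (B * (x - c * t))) ^ (2 : ℕ)) ^ (1 / p)) :
    ∀ x t : ℝ,
      deriv (fun t' => u x t') t + deriv (fun x' => u x' t) x
        - deriv (fun t' => iteratedDeriv 2 (fun x' => u x' t') x) t
        + deriv (fun x' => u x' t ^ (p + 1)) x = 0 := by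
  have hp₀ : 0 < p := by linarith
  have hamp : 0 < (p + 2) * (c - 1) / 2 := by nlinarith
  have hA₀ : 0 < A := hA ▸ rpow_pos_of_pos hamp _
  have hAp : A ^ p = (p + 2) * (c - 1) / 2 := by
    rw [hA, ← rpow_mul hamp.le, one_div_mul_cancel hp₀.ne', rpow_one]
  have hB₂ : 4 * c * B ^ 2 = p ^ 2 * (c - 1) := by
    rw [hB, mul_pow, sq_sqrt (by rw [sub_nonneg, div_le_one (by linarith)]; exact hc.le)]
    field_simp
    ring
  have hsmooth : ContDiff ℝ 3 fun ξ => A * cosh (B * ξ) ^ (-2 / p) :=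
    contDiff_const.mul <| (contDiff_const.mul contDiff_id).cosh.rpow_const_of_ne
      fun ξ => (cosh_pos _).ne'
  have hwave : u = fun x t => A * cosh (B * (x - c * t)) ^ (-2 / p) := by
    funext x t
    rw [hu, one_div_sq_rpow_one_div (cosh_pos _)]
  subst hwave
  exact gbbmResidual_travelingWave hsmooth (solitaryProfile_ode hp₀.ne' hA₀ hAp hB₂)
end
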